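/- For an integer $n \geq 7$, the number $n(n-3)/2$ is a prime power if and only if $n = 9$. -/
import Mathlib


theorem isPrimePow_n_mul_n_sub_three_div_two_iff (n : ℕ) (hn : 7 ≤ n) :
    IsPrimePow (n * (n - 3) / 2) ↔ n = 9 := by
  constructor
  · rintro ⟨p, k, hp, hk, hpk⟩
    have hp' : Nat.Prime p := hp.nat_prime
    have heven : 2 ∣ n * (n - 3) := by
      rcases Nat.even_or_odd n with h | h
      · exact Dvd.dvd.mul_right h.two_dvd _
      · obtain ⟨t, ht⟩ := h
        exact Dvd.dvd.mul_left ⟨t - 1, by omega⟩ _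
    have key : n * (n - 3) = 2 * p ^ k := by
      have h1 := Nat.div_mul_cancel heven
      omega
    by_cases h3 : 3 ∣ n
    · -- n = 3m, 9 m (m-1) = 2 p^k, p = 3, then m = 3
      obtain ⟨m, hm⟩ := h3
      have hm3 : 3 ≤ m := by omega
      have hsub : n - 3 = 3 * (m - 1) := by omega
      have key2 : 9 * (m * (m - 1)) = 2 * p ^ k := by
        calc 9 * (m * (m - 1)) = (3 * m) * (3 * (m - 1)) := by ring
          _ = n * (n - 3) := by rw [hsub, hm]
          _ = 2 * p ^ k := key
      have h3d : 3 ∣ 2 * p ^ k := ⟨3 * (m * (m - 1)), by omega⟩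
      have hp3 : p = 3 := by
        rcases (Nat.Prime.dvd_mul Nat.prime_three).mp h3d with h | h
        · omega
        · exact ((Nat.prime_dvd_prime_iff_eq Nat.prime_three hp').mp
            (Nat.prime_three.dvd_of_dvd_pow h)).symm
      subst hp3
      have h3m : 3 ∣ m := by
        by_contra hndvd
        have hmd : m ∣ 2 * 3 ^ k := ⟨9 * (m - 1), by rw [← key2]; ring⟩
        have hcop : Nat.Coprime m (3 ^ k) :=
          ((Nat.prime_three.coprime_iff_not_dvd.mpr hndvd).symm).pow_right k
        have := hcop.dvd_of_dvd_mul_right hmd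
        have := Nat.le_of_dvd (by norm_num) this
        omega
      have hnd1 : ¬ (3 ∣ m - 1) := by omega
      have hmd : (m - 1) ∣ 2 * 3 ^ k := ⟨9 * m, by rw [← key2]; ring⟩
      have hcop : Nat.Coprime (m - 1) (3 ^ k) :=
        ((Nat.prime_three.coprime_iff_not_dvd.mpr hnd1).symm).pow_right k
      have hd2 := hcop.dvd_of_dvd_mul_right hmd
      have := Nat.le_of_dvd (by norm_num) hd2
      omega
    · -- gcd(n, n-3) = 1
      have hcop : Nat.Coprime n (n - 3) := by
        have hd3 : Nat.gcd n (n - 3) ∣ 3 := by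
          have h1 := Nat.gcd_dvd_left n (n - 3)
          have h2 := Nat.gcd_dvd_right n (n - 3)
          have h4 := Nat.dvd_sub h1 h2
          simpa [show n - (n - 3) = 3 by omega] using h4
        rcases (Nat.dvd_prime Nat.prime_three).mp hd3 with h | h
        · exact h
        · exact absurd (h ▸ Nat.gcd_dvd_left n (n - 3)) h3
      have hpdvd : p ∣ n * (n - 3) := by
        rw [key]; exact Dvd.dvd.mul_left (dvd_pow_self p (by omega)) 2
      rcases (Nat.Prime.dvd_mul hp').mp hpdvd with h | h
      · have hd : (n - 3) ∣ 2 * p ^ k := by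
          rw [← key]; exact dvd_mul_left (n - 3) n
        have hc : Nat.Coprime (n - 3) (p ^ k) :=
          (Nat.Coprime.coprime_dvd_right h hcop.symm).pow_right k
        have := Nat.le_of_dvd (by norm_num) (hc.dvd_of_dvd_mul_right hd)
        omega
      · have hd : n ∣ 2 * p ^ k := by
          rw [← key]; exact Dvd.intro _ rfl
        have hc : Nat.Coprime n (p ^ k) :=
          (Nat.Coprime.coprime_dvd_right h hcop).pow_right k
        have := Nat.le_of_dvd (by norm_num) (hc.dvd_of_dvd_mul_right hd)
        omega
  · rintro rfl
    norm_num
    exact ⟨3, 3, Nat.prime_three.prime, by norm_num, by norm_num⟩
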